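/- Let a : ℕ → ℕ be defined by a(0) = 2 and a(n+1) = a(n)·(a(n) + 1). Then there exists a real constant c > 1 such that for every n, a(n) = ⌊c^(2^n)⌋. (This sequence gives the birthdays of the successive powers of the canonical surreal form of 2.) -/

import Mathlib

/-- The sequence `a 0 = 2`, `a (n+1) = a n * (a n + 1)` of birthdays of powers of the
canonical surreal form of 2. -/
def birthdaySeq : ℕ → ℕ
  | 0 => 2
  | n + 1 => birthdaySeq n * (birthdaySeq n + 1)

/-!
If `x n ^ 2 ≤ x (n + 1)` and `y (n + 1) ≤ y n ^ 2`, the `2 ^ n`-th roots of `x n` increase and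
those of `y n` decrease, so the supremum `c` of the former lies below all of the latter, which
gives `x n ≤ c ^ 2 ^ n ≤ y n`. For `x = a` and `y = a + 1` with `a` the birthday sequence the
upper bound is even strict, since `a (n + 1) + 1 < (a n + 1) ^ 2`; hence `a n = ⌊c ^ 2 ^ n⌋`.
-/

noncomputable def twoPowRoot (n : ℕ) (t : ℝ) : ℝ := t ^ ((2 ^ n : ℕ) : ℝ)⁻¹

theorem twoPowRoot_nonneg (n : ℕ) {t : ℝ} (ht : 0 ≤ t) : 0 ≤ twoPowRoot n t :=
  Real.rpow_nonneg ht _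

theorem twoPowRoot_pow (n : ℕ) {t : ℝ} (ht : 0 ≤ t) : twoPowRoot n t ^ 2 ^ n = t :=
  Real.rpow_inv_natCast_pow ht (by positivity)

theorem twoPowRoot_mono (n : ℕ) {s t : ℝ} (hs : 0 ≤ s) (hst : s ≤ t) :
    twoPowRoot n s ≤ twoPowRoot n t :=
  Real.rpow_le_rpow hs hst (by positivity)

theorem twoPowRoot_succ_sq (n : ℕ) {t : ℝ} (ht : 0 ≤ t) :
    twoPowRoot (n + 1) (t ^ 2) = twoPowRoot n t := by
  refine (pow_left_inj₀ (twoPowRoot_nonneg _ (sq_nonneg t)) (twoPowRoot_nonneg n ht)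
    (pow_ne_zero (n + 1) two_ne_zero)).1 ?_
  rw [twoPowRoot_pow _ (sq_nonneg t), pow_succ (2 : ℕ), pow_mul, twoPowRoot_pow n ht]

theorem exists_forall_pow_two_pow_mem_Icc {x y : ℕ → ℝ} (hx₀ : ∀ n, 0 ≤ x n)
    (hxy : ∀ n, x n ≤ y n) (hx : ∀ n, x n ^ 2 ≤ x (n + 1)) (hy : ∀ n, y (n + 1) ≤ y n ^ 2) :
    ∃ c : ℝ, ∀ n, x n ≤ c ^ 2 ^ n ∧ c ^ 2 ^ n ≤ y n := by
  have hy₀ n : 0 ≤ y n := (hx₀ n).trans (hxy n)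
  let l (n : ℕ) : ℝ := twoPowRoot n (x n)
  let u (n : ℕ) : ℝ := twoPowRoot n (y n)
  have hl : Monotone l := monotone_nat_of_le_succ fun n =>
    (twoPowRoot_succ_sq n (hx₀ n)).symm.trans_le (twoPowRoot_mono _ (sq_nonneg _) (hx n))
  have hu : Antitone u := antitone_nat_of_succ_le fun n =>
    (twoPowRoot_mono _ (hy₀ _) (hy n)).trans_eq (twoPowRoot_succ_sq n (hy₀ n))
  have hlu m n : l m ≤ u n :=
    (hl (le_max_left m n)).trans
      ((twoPowRoot_mono _ (hx₀ _) (hxy _)).trans (hu (le_max_right m n)))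
  have hbdd : BddAbove (Set.range l) := ⟨u 0, Set.forall_mem_range.2 fun m => hlu m 0⟩
  have hc₀ : 0 ≤ ⨆ m, l m := (twoPowRoot_nonneg 0 (hx₀ 0)).trans (le_ciSup hbdd 0)
  refine ⟨⨆ m, l m, fun n => ⟨?_, ?_⟩⟩
  · rw [← twoPowRoot_pow n (hx₀ n)]
    exact pow_le_pow_left₀ (twoPowRoot_nonneg n (hx₀ n)) (le_ciSup hbdd n) _
  · rw [← twoPowRoot_pow n (hy₀ n)]
    exact pow_le_pow_left₀ hc₀ (ciSup_le fun m => hlu m n) _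

theorem exists_forall_floor_pow_two_pow_eq {a : ℕ → ℕ} (hsq : ∀ n, a n ^ 2 ≤ a (n + 1))
    (hlt : ∀ n, a (n + 1) + 1 < (a n + 1) ^ 2) :
    ∃ c : ℝ, ∀ n, ⌊c ^ 2 ^ n⌋ = a n := by
  obtain ⟨c, hc⟩ := exists_forall_pow_two_pow_mem_Icc (x := fun n => (a n : ℝ))
    (y := fun n => (a n : ℝ) + 1) (fun n => by positivity) (fun n => by simp)
    (fun n => by exact_mod_cast hsq n) (fun n => by exact_mod_cast (hlt n).le)
  refine ⟨c, fun n => Int.floor_eq_iff.2 ⟨by exact_mod_cast (hc n).1, ?_⟩⟩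
  have hc_succ : (c ^ 2 ^ n) ^ 2 < ((a n : ℝ) + 1) ^ 2 :=
    calc (c ^ 2 ^ n) ^ 2 = c ^ 2 ^ (n + 1) := by rw [← pow_mul, ← pow_succ]
      _ ≤ (a (n + 1) : ℝ) + 1 := (hc (n + 1)).2
      _ < ((a n : ℝ) + 1) ^ 2 := by exact_mod_cast hlt n
  push_cast
  exact lt_of_pow_lt_pow_left₀ 2 (by positivity) hc_succ

theorem birthdaySeq_pos (n : ℕ) : 0 < birthdaySeq n := by
  induction n with
  | zero => decide
  | succ n ih => exact Nat.mul_pos ih (Nat.succ_pos _)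

theorem birthdaySeq_sq_le_succ (n : ℕ) : birthdaySeq n ^ 2 ≤ birthdaySeq (n + 1) := by
  rw [birthdaySeq, sq]
  exact Nat.mul_le_mul_left _ (Nat.le_succ _)

theorem birthdaySeq_succ_add_one_lt (n : ℕ) :
    birthdaySeq (n + 1) + 1 < (birthdaySeq n + 1) ^ 2 := by
  have := birthdaySeq_pos n
  rw [birthdaySeq]
  nlinarith

theorem birthdaySeq_eq_floor_pow :
    ∃ c : ℝ, 1 < c ∧ ∀ n : ℕ, (birthdaySeq n : ℤ) = ⌊c ^ (2 ^ n)⌋ := by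
  obtain ⟨c, hc⟩ :=
    exists_forall_floor_pow_two_pow_eq birthdaySeq_sq_le_succ birthdaySeq_succ_add_one_lt
  have hc₀ : ⌊c⌋ = 2 := by simpa [birthdaySeq] using hc 0
  have h2c : (2 : ℝ) ≤ c := by exact_mod_cast (Int.floor_eq_iff.1 hc₀).1
  exact ⟨c, one_lt_two.trans_le h2c, fun n => (hc n).symm⟩
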